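/- Let X and Y be finite nonempty sets and let f, f' : X → Y with f surjective. Suppose α, β, γ, δ are positive reals such that the number of y ∈ Y for which there exists y' ∈ Y with |L_f(y) ∩ L_{f'}(y')| ≥ α is at most β·|Y|, and γ ≤ |L_f(y)| ≤ δ for every y ∈ Y. Then F(ρ_f, ρ_{f'})² ≤ α²·|Y|²/(γ·|X|) + β·δ·|Y|/|X|. -/

import Mathlib

open Matrix BigOperators
open scoped ComplexOrder

/-- The positive semidefinite square root of a matrix (zero if the matrix is
not positive semidefinite). -/
noncomputable def msqrt {n : Type*} [Fintype n] [DecidableEq n]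
    (A : Matrix n n ℂ) : Matrix n n ℂ :=
  letI := Classical.dec A.PosSemidef
  if h : A.PosSemidef then
    (h.1.eigenvectorUnitary : Matrix n n ℂ) * diagonal (((↑) : ℝ → ℂ) ∘ Real.sqrt ∘ h.1.eigenvalues) *
      (star h.1.eigenvectorUnitary : Matrix n n ℂ) else 0

/-- The fidelity `F(ρ,σ) = tr √(√ρ σ √ρ)` of two (positive semidefinite) matrices. -/
noncomputable def fidelity {n : Type*} [Fintype n] [DecidableEq n]
    (ρ σ : Matrix n n ℂ) : ℝ :=
  ((msqrt (msqrt ρ * σ * msqrt ρ)).trace).re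

/-- The hiding state `ρ_f` of a function `f : X → Y`:
`(ρ_f)_{x,x'} = 1/|X|` if `f x = f x'` and `0` otherwise. -/
noncomputable def hidingState {X Y : Type*} [Fintype X] [DecidableEq Y]
    (f : X → Y) : Matrix X X ℂ :=
  Matrix.of fun x x' => if f x = f x' then (1 : ℂ) / (Fintype.card X) else 0

/-!
Let `W` be the `X × Y` matrix whose columns are the normalised indicator vectors of the fibres of
`f`; they are orthonormal because `f` is surjective, so `ρ_f = W diag(|L_f(y)| / |X|) Wᴴ` and
`√ρ_f = W diag(√(|L_f(y)| / |X|)) Wᴴ`. Writing `ρ_{f'} = V Vᴴ` with `V x y' = [f' x = y'] / √|X|`,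
one gets `√ρ_f V = W N` for the overlap matrix `N y y' = |L_f(y) ∩ L_{f'}(y')| / |X|`, hence
`√ρ_f ρ_{f'} √ρ_f = W N Nᴴ Wᴴ` and `F(ρ_f, ρ_{f'}) = tr √(N Nᴴ) ≤ ∑_y ‖N_y‖`, because the
diagonal of a positive square root is dominated by the square roots of the diagonal.

Cauchy–Schwarz with weights `|L_f(y)|` turns this into `F² ≤ |X|⁻¹ ∑_y ‖c_y‖² / |L_f(y)|`, where
`c_y` is the `y`-th row of overlap counts. A row with an entry `≥ α` contributes at most
`|L_f(y)| ≤ δ`; every other row contributes at most `|Y| α² / γ`.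
-/

section msqrt

open scoped MatrixOrder

variable {n : Type*} [Fintype n] [DecidableEq n]

lemma msqrt_eq_cfcSqrt {A : Matrix n n ℂ} (hA : A.PosSemidef) : msqrt A = CFC.sqrt A := by
  rw [CFC.sqrt_eq_real_sqrt A hA.nonneg, cfcₙ_eq_cfc, hA.1.cfc_eq]
  simp only [msqrt, dif_pos hA, IsHermitian.cfc, Unitary.conjStarAlgAut_apply]
  rfl

lemma posSemidef_msqrt (A : Matrix n n ℂ) : (msqrt A).PosSemidef := by
  by_cases hA : A.PosSemidef
  · rw [msqrt_eq_cfcSqrt hA]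
    exact (CFC.sqrt_nonneg A).posSemidef
  · simp only [msqrt, dif_neg hA]
    exact PosSemidef.zero

lemma msqrt_mul_self {A : Matrix n n ℂ} (hA : A.PosSemidef) : msqrt A * msqrt A = A := by
  rw [msqrt_eq_cfcSqrt hA]
  exact CFC.sqrt_mul_sqrt_self A hA.nonneg

lemma msqrt_eq_of_mul_self {A B : Matrix n n ℂ} (hB : B.PosSemidef) (hBA : B * B = A) :
    msqrt A = B := by
  have hA : A.PosSemidef := by
    simpa [hB.isHermitian.eq, hBA] using posSemidef_self_mul_conjTranspose B
  rw [msqrt_eq_cfcSqrt hA]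
  exact CFC.sqrt_unique hBA hB.nonneg

lemma msqrt_diagonal {d : n → ℝ} (hd : 0 ≤ d) :
    msqrt (diagonal fun i => (d i : ℂ)) = diagonal fun i => (√(d i) : ℂ) := by
  refine msqrt_eq_of_mul_self (posSemidef_diagonal_iff.mpr fun i => ?_) ?_
  · exact_mod_cast Real.sqrt_nonneg _
  · rw [diagonal_mul_diagonal]
    congr 1
    ext i
    rw [← Complex.ofReal_mul, Real.mul_self_sqrt (hd i)]

variable {m : Type*} [Fintype m] [DecidableEq m]

lemma msqrt_mul_mul_conjTranspose_of_isometry {W : Matrix m n ℂ} (hW : Wᴴ * W = 1)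
    {G : Matrix n n ℂ} (hG : G.PosSemidef) : msqrt (W * G * Wᴴ) = W * msqrt G * Wᴴ := by
  refine msqrt_eq_of_mul_self ((posSemidef_msqrt G).mul_mul_conjTranspose_same W) ?_
  calc W * msqrt G * Wᴴ * (W * msqrt G * Wᴴ)
      = W * msqrt G * (Wᴴ * W) * msqrt G * Wᴴ := by simp only [Matrix.mul_assoc]
    _ = W * G * Wᴴ := by rw [hW, Matrix.mul_one, Matrix.mul_assoc W, msqrt_mul_self hG]

lemma re_trace_msqrt_le_sum_sqrt_diag {G : Matrix n n ℂ} (hG : G.PosSemidef) :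
    (msqrt G).trace.re ≤ ∑ i, √(G i i).re := by
  have hB := (posSemidef_msqrt G).isHermitian
  rw [Matrix.trace, Complex.re_sum]
  refine Finset.sum_le_sum fun i _ => Real.le_sqrt_of_sq_le ?_
  have hdiag : (G i i).re = ∑ k, Complex.normSq (msqrt G i k) := by
    conv_lhs => rw [← msqrt_mul_self hG]
    rw [Matrix.mul_apply, Complex.re_sum]
    refine Finset.sum_congr rfl fun k _ => ?_
    rw [← hB.apply k i, Complex.star_def, Complex.mul_conj, Complex.ofReal_re]
  calc (diag (msqrt G) i).re ^ 2 ≤ Complex.normSq (msqrt G i i) := by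
        rw [Complex.normSq_apply, diag_apply]; nlinarith [sq_nonneg (msqrt G i i).im]
    _ ≤ (G i i).re := hdiag ▸
        Finset.single_le_sum (fun k _ => Complex.normSq_nonneg _) (Finset.mem_univ i)

end msqrt

section fidelity

variable {m n k : Type*} [Fintype m] [DecidableEq m] [Fintype n] [DecidableEq n] [Fintype k]

lemma fidelity_nonneg (ρ σ : Matrix m m ℂ) : 0 ≤ fidelity ρ σ :=
  Complex.nonneg_iff.mp (posSemidef_msqrt _).trace_nonneg |>.1

lemma fidelity_eq_of_msqrt_mul_eq {ρ σ : Matrix m m ℂ} {V : Matrix m k ℂ} {W : Matrix m n ℂ}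
    {N : Matrix n k ℂ} (hσ : σ = V * Vᴴ) (hW : Wᴴ * W = 1) (hρV : msqrt ρ * V = W * N) :
    fidelity ρ σ = (msqrt (N * Nᴴ)).trace.re := by
  have hconj : msqrt ρ * σ * msqrt ρ = W * (N * Nᴴ) * Wᴴ := by
    calc msqrt ρ * σ * msqrt ρ = (msqrt ρ * V) * (msqrt ρ * V)ᴴ := by
          rw [hσ, conjTranspose_mul, (posSemidef_msqrt ρ).isHermitian.eq]
          simp only [Matrix.mul_assoc]
      _ = W * (N * Nᴴ) * Wᴴ := by
          rw [hρV, conjTranspose_mul]; simp only [Matrix.mul_assoc]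
  rw [fidelity, hconj, msqrt_mul_mul_conjTranspose_of_isometry hW
    (posSemidef_self_mul_conjTranspose N), trace_mul_cycle, hW, Matrix.one_mul]

end fidelity

section fiberMatrix

open Finset

variable {X Y Z : Type*} [DecidableEq Y]

def fiberMatrix (f : X → Y) : Matrix X Y ℂ := of fun x y => if f x = y then 1 else 0

lemma fiberMatrix_mul_apply [Fintype Y] (f : X → Y) (M : Matrix Y Z ℂ) (x : X) (z : Z) :
    (fiberMatrix f * M) x z = M (f x) z := by
  simp [fiberMatrix, Matrix.mul_apply]

lemma fiberMatrix_mul_diagonal_mul_conjTranspose [Fintype Y] (f g : X → Y) (d : Y → ℂ) :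
    fiberMatrix f * diagonal d * (fiberMatrix g)ᴴ =
      of fun x x' => if f x = g x' then d (f x) else 0 := by
  ext x x'
  rw [Matrix.mul_assoc, fiberMatrix_mul_apply, diagonal_mul]
  simp [fiberMatrix, eq_comm]

lemma conjTranspose_fiberMatrix_mul_fiberMatrix_apply [Fintype X] (f g : X → Y) (y y' : Y) :
    ((fiberMatrix f)ᴴ * fiberMatrix g) y y' = #{x | f x = y ∧ g x = y'} := by
  rw [natCast_card_filter, Matrix.mul_apply]
  refine sum_congr rfl fun x _ => ?_
  simp only [fiberMatrix, conjTranspose_apply, of_apply]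
  split_ifs <;> simp_all

lemma conjTranspose_fiberMatrix_mul_self [Fintype X] (f : X → Y) :
    (fiberMatrix f)ᴴ * fiberMatrix f = diagonal fun y => (#{x | f x = y} : ℂ) := by
  ext y y'
  rw [conjTranspose_fiberMatrix_mul_fiberMatrix_apply, diagonal_apply]
  split_ifs with h
  · simp [h]
  · simpa using fun x hx hx' => h (hx.symm.trans hx')

lemma sum_card_filter_and_eq [Fintype X] [Fintype Y] (f f' : X → Y) (y : Y) :
    ∑ y', #{x | f x = y ∧ f' x = y'} = #{x | f x = y} := by
  rw [card_eq_sum_card_fiberwise (f := f') (t := univ) fun _ _ => mem_coe.mpr (mem_univ _)]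
  simp only [filter_filter]

lemma sum_card_fiber_eq_card [Fintype X] [Fintype Y] (f : X → Y) :
    ∑ y, #{x | f x = y} = Fintype.card X :=
  (card_eq_sum_card_fiberwise fun _ _ => mem_coe.mpr (mem_univ _)).symm

lemma hidingState_eq_fiberMatrix [Fintype X] [Fintype Y] (f : X → Y) :
    hidingState f =
      fiberMatrix f * diagonal (fun _ : Y => (Fintype.card X : ℂ)⁻¹) * (fiberMatrix f)ᴴ := by
  rw [fiberMatrix_mul_diagonal_mul_conjTranspose]
  ext x x'
  simp [hidingState]

end fiberMatrix

noncomputable section hidingState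

open Finset

variable {X Y : Type*} [Fintype X] [DecidableEq Y]

lemma card_fiber_pos {f : X → Y} (hf : Function.Surjective f) (y : Y) :
    0 < (#{x | f x = y} : ℝ) := by
  obtain ⟨x, rfl⟩ := hf y
  exact_mod_cast card_pos.mpr ⟨x, by simp⟩

variable [Fintype Y]

def normalizedFiberMatrix (f : X → Y) : Matrix X Y ℂ :=
  fiberMatrix f * diagonal fun y => (((√(#{x | f x = y} : ℝ))⁻¹ : ℝ) : ℂ)

def fiberOverlapMatrix (f f' : X → Y) : Matrix Y Y ℂ :=
  of fun y y' => (((#{x | f x = y ∧ f' x = y'} : ℝ) / Fintype.card X : ℝ) : ℂ)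

variable {f : X → Y}

lemma inv_sqrt_mul_mul_inv_sqrt {a : ℝ} (ha : 0 < a) (b : ℝ) : (√a)⁻¹ * (a * b) * (√a)⁻¹ = b := by
  rw [mul_comm, ← mul_assoc, ← mul_inv, Real.mul_self_sqrt ha.le, inv_mul_cancel_left₀ ha.ne']

lemma sqrt_div_mul_inv_sqrt_mul {a n : ℝ} (ha : 0 < a) (hn : 0 ≤ n) (c : ℝ) :
    √(a / n) * ((√a)⁻¹ * (c * (√n)⁻¹)) = c / n := by
  rw [Real.sqrt_div' _ hn, div_eq_mul_inv,
    show √a * (√n)⁻¹ * ((√a)⁻¹ * (c * (√n)⁻¹)) = √a * (√a)⁻¹ * c * ((√n)⁻¹ * (√n)⁻¹) by ring,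
    mul_inv_cancel₀ (Real.sqrt_ne_zero'.mpr ha), ← mul_inv, Real.mul_self_sqrt hn, one_mul,
    div_eq_mul_inv]

lemma conjTranspose_normalizedFiberMatrix_mul_self (hf : Function.Surjective f) :
    (normalizedFiberMatrix f)ᴴ * normalizedFiberMatrix f = 1 := by
  rw [normalizedFiberMatrix, conjTranspose_mul, diagonal_conjTranspose, Matrix.mul_assoc,
    ← Matrix.mul_assoc (fiberMatrix f)ᴴ, conjTranspose_fiberMatrix_mul_self, diagonal_mul_diagonal,
    diagonal_mul_diagonal, ← diagonal_one]
  congr 1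
  funext y
  simp only [Pi.star_apply, Complex.star_def, Complex.conj_ofReal, ← mul_assoc]
  simpa using congrArg ((↑) : ℝ → ℂ) (inv_sqrt_mul_mul_inv_sqrt (card_fiber_pos hf y) 1)

lemma hidingState_eq_normalizedFiberMatrix (hf : Function.Surjective f) :
    hidingState f = normalizedFiberMatrix f *
      diagonal (fun y => (((#{x | f x = y} : ℝ) / Fintype.card X : ℝ) : ℂ)) *
      (normalizedFiberMatrix f)ᴴ := by
  rw [hidingState_eq_fiberMatrix, normalizedFiberMatrix, conjTranspose_mul, diagonal_conjTranspose]
  conv_rhs => rw [← Matrix.mul_assoc, Matrix.mul_assoc (fiberMatrix f), diagonal_mul_diagonal,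
    Matrix.mul_assoc (fiberMatrix f), diagonal_mul_diagonal]
  refine congrArg (fun d => fiberMatrix f * diagonal d * (fiberMatrix f)ᴴ) (funext fun y => ?_)
  simp only [Pi.star_apply, Complex.star_def, Complex.conj_ofReal]
  rw [← Complex.ofReal_natCast, ← Complex.ofReal_inv, ← Complex.ofReal_mul, ← Complex.ofReal_mul,
    Complex.ofReal_inj, div_eq_mul_inv, inv_sqrt_mul_mul_inv_sqrt (card_fiber_pos hf y)]

def hidingStateFactor (f : X → Y) : Matrix X Y ℂ :=
  fiberMatrix f * diagonal fun _ : Y => (((√(Fintype.card X))⁻¹ : ℝ) : ℂ)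

lemma hidingState_eq_hidingStateFactor_mul_conjTranspose (f' : X → Y) :
    hidingState f' = hidingStateFactor f' * (hidingStateFactor f')ᴴ := by
  rw [hidingStateFactor, conjTranspose_mul, diagonal_conjTranspose, Matrix.mul_assoc,
    ← Matrix.mul_assoc (diagonal _), diagonal_mul_diagonal, ← Matrix.mul_assoc,
    hidingState_eq_fiberMatrix]
  refine congrArg (fun d => fiberMatrix f' * diagonal d * (fiberMatrix f')ᴴ) (funext fun y => ?_)
  simp only [Pi.star_apply, Complex.star_def, Complex.conj_ofReal, ← Complex.ofReal_mul, ← mul_inv,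
    Real.mul_self_sqrt (Nat.cast_nonneg _)]
  push_cast
  rfl

variable [DecidableEq X]

lemma msqrt_hidingState (hf : Function.Surjective f) :
    msqrt (hidingState f) = normalizedFiberMatrix f *
      diagonal (fun y => (√((#{x | f x = y} : ℝ) / Fintype.card X) : ℂ)) *
      (normalizedFiberMatrix f)ᴴ := by
  rw [hidingState_eq_normalizedFiberMatrix hf, msqrt_mul_mul_conjTranspose_of_isometry
    (conjTranspose_normalizedFiberMatrix_mul_self hf), msqrt_diagonal]
  · exact fun y => by positivity
  · exact posSemidef_diagonal_iff.mpr fun y => by positivity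

lemma msqrt_hidingState_mul_hidingStateFactor (hf : Function.Surjective f) (f' : X → Y) :
    msqrt (hidingState f) * hidingStateFactor f' =
      normalizedFiberMatrix f * fiberOverlapMatrix f f' := by
  rw [msqrt_hidingState hf, normalizedFiberMatrix, conjTranspose_mul, diagonal_conjTranspose,
    hidingStateFactor]
  simp only [Matrix.mul_assoc]
  congr 2
  ext y y'
  rw [← Matrix.mul_assoc (fiberMatrix f)ᴴ, diagonal_mul, diagonal_mul, mul_diagonal,
    conjTranspose_fiberMatrix_mul_fiberMatrix_apply]
  simp only [fiberOverlapMatrix, of_apply, Pi.star_apply, Complex.star_def, Complex.conj_ofReal]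
  rw [← Complex.ofReal_natCast, ← Complex.ofReal_mul, ← Complex.ofReal_mul, ← Complex.ofReal_mul,
    Complex.ofReal_inj]
  exact sqrt_div_mul_inv_sqrt_mul (card_fiber_pos hf y) (Nat.cast_nonneg _) _

lemma fidelity_hidingState_le (hf : Function.Surjective f) (f' : X → Y) :
    fidelity (hidingState f) (hidingState f') ≤
      (∑ y, √(∑ y', (#{x | f x = y ∧ f' x = y'} : ℝ) ^ 2)) / Fintype.card X := by
  rw [fidelity_eq_of_msqrt_mul_eq (hidingState_eq_hidingStateFactor_mul_conjTranspose f')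
    (conjTranspose_normalizedFiberMatrix_mul_self hf)
    (msqrt_hidingState_mul_hidingStateFactor hf f')]
  refine (re_trace_msqrt_le_sum_sqrt_diag (posSemidef_self_mul_conjTranspose _)).trans_eq ?_
  rw [sum_div]
  refine sum_congr rfl fun y _ => ?_
  simp only [mul_apply, conjTranspose_apply, fiberOverlapMatrix, of_apply, Complex.star_def,
    Complex.conj_ofReal, ← sq, ← Complex.ofReal_pow, ← Complex.ofReal_sum, Complex.ofReal_re,
    div_pow, ← sum_div]
  rw [Real.sqrt_div' _ (by positivity), Real.sqrt_sq (by positivity)]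

end hidingState

section

open Finset

variable {ι κ : Type*} [Fintype ι] [Fintype κ]

lemma sum_sq_div_sum_le {c : κ → ℝ} (hc : ∀ j, 0 ≤ c j) {α γ δ : ℝ} (hγ : 0 < γ)
    (hlow : γ ≤ ∑ j, c j) (hup : ∑ j, c j ≤ δ) :
    (∑ j, c j ^ 2) / ∑ j, c j ≤
      (if ∃ j, α ≤ c j then δ else 0) + Fintype.card κ * α ^ 2 / γ := by
  have hpos : 0 < ∑ j, c j := hγ.trans_le hlow
  split_ifs with hbig
  · have hsq : ∑ j, c j ^ 2 ≤ (∑ j, c j) ^ 2 := sum_sq_le_sq_sum_of_nonneg fun j _ => hc j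
    calc (∑ j, c j ^ 2) / ∑ j, c j ≤ ∑ j, c j := by
          rw [div_le_iff₀ hpos, ← sq]; exact hsq
      _ ≤ δ + Fintype.card κ * α ^ 2 / γ := le_add_of_le_of_nonneg hup (by positivity)
  · push Not at hbig
    have hsq : ∑ j, c j ^ 2 ≤ Fintype.card κ * α ^ 2 := by
      simpa using sum_le_card_nsmul univ (fun j => c j ^ 2) (α ^ 2) fun j _ =>
        pow_le_pow_left₀ (hc j) (hbig j).le 2
    rw [zero_add]
    exact div_le_div₀ (by positivity) hsq hγ hlow

lemma sq_sum_sqrt_sum_sq_le {c : ι → κ → ℝ} (hc : ∀ i j, 0 ≤ c i j) {α γ δ : ℝ} (hγ : 0 < γ)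
    (hlow : ∀ i, γ ≤ ∑ j, c i j) (hup : ∀ i, ∑ j, c i j ≤ δ) :
    (∑ i, √(∑ j, c i j ^ 2)) ^ 2 ≤ (∑ i, ∑ j, c i j) *
      (δ * #{i | ∃ j, α ≤ c i j} + Fintype.card ι * (Fintype.card κ * α ^ 2 / γ)) := by
  have hpos : ∀ i, 0 < ∑ j, c i j := fun i => hγ.trans_le (hlow i)
  have hcauchySchwarz := sum_sq_le_sum_mul_sum_of_sq_le_mul univ (r := fun i => √(∑ j, c i j ^ 2))
    (g := fun i => (∑ j, c i j ^ 2) / ∑ j, c i j) (fun i _ => (hpos i).le)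
    (fun i _ => div_nonneg (sum_nonneg fun j _ => sq_nonneg _) (hpos i).le) fun i _ => by
      rw [Real.sq_sqrt (sum_nonneg fun j _ => sq_nonneg _), mul_div_cancel₀ _ (hpos i).ne']
  refine hcauchySchwarz.trans (mul_le_mul_of_nonneg_left ?_ (sum_nonneg fun i _ => (hpos i).le))
  calc ∑ i, (∑ j, c i j ^ 2) / ∑ j, c i j
      ≤ ∑ i, ((if ∃ j, α ≤ c i j then δ else 0) + Fintype.card κ * α ^ 2 / γ) :=
        sum_le_sum fun i _ => sum_sq_div_sum_le (hc i) hγ (hlow i) (hup i)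
    _ = δ * #{i | ∃ j, α ≤ c i j} + Fintype.card ι * (Fintype.card κ * α ^ 2 / γ) := by
        rw [sum_add_distrib, sum_ite, sum_const_zero, sum_const, sum_const, card_univ]
        simp [mul_comm]

end

theorem stmt_1_general {X Y : Type*} [Fintype X] [Fintype Y] [DecidableEq X] [DecidableEq Y]
    [Nonempty X] (f f' : X → Y) (hf : Function.Surjective f)
    (α β γ δ : ℝ) (hγ : 0 < γ) (hδ : 0 < δ)
    (hcount : ((Finset.univ.filter (fun y : Y => ∃ y' : Y,
        α ≤ ((Finset.univ.filter (fun x : X => f x = y ∧ f' x = y')).card : ℝ))).card : ℝ)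
      ≤ β * (Fintype.card Y : ℝ))
    (hlower : ∀ y : Y, γ ≤ ((Finset.univ.filter (fun x : X => f x = y)).card : ℝ))
    (hupper : ∀ y : Y, ((Finset.univ.filter (fun x : X => f x = y)).card : ℝ) ≤ δ) :
    (fidelity (hidingState f) (hidingState f')) ^ 2 ≤
      α ^ 2 * (Fintype.card Y : ℝ) ^ 2 / (γ * (Fintype.card X : ℝ))
        + β * δ * (Fintype.card Y : ℝ) / (Fintype.card X : ℝ) := by
  have hX : 0 < (Fintype.card X : ℝ) := Nat.cast_pos.mpr Fintype.card_pos
  have hrows (y : Y) : ∑ y', ((Finset.univ.filter (fun x : X => f x = y ∧ f' x = y')).card : ℝ) =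
      (Finset.univ.filter (fun x : X => f x = y)).card := by
    exact_mod_cast sum_card_filter_and_eq f f' y
  have hbound := sq_sum_sqrt_sum_sq_le (α := α) (fun _ _ => Nat.cast_nonneg _) hγ
    (fun y => (hrows y).symm ▸ hlower y) (fun y => (hrows y).symm ▸ hupper y)
  rw [Finset.sum_congr rfl fun y _ => hrows y, ← Nat.cast_sum, sum_card_fiber_eq_card]
    at hbound
  calc (fidelity (hidingState f) (hidingState f')) ^ 2
      ≤ ((∑ y, √(∑ y', ((Finset.univ.filter (fun x : X => f x = y ∧ f' x = y')).card : ℝ) ^ 2))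
          / Fintype.card X) ^ 2 :=
        pow_le_pow_left₀ (fidelity_nonneg _ _) (fidelity_hidingState_le hf f') 2
    _ ≤ Fintype.card X * (δ * (β * Fintype.card Y) + Fintype.card Y * (Fintype.card Y * α ^ 2 / γ))
          / (Fintype.card X : ℝ) ^ 2 := by
        rw [div_pow]
        refine div_le_div_of_nonneg_right (hbound.trans ?_) (sq_nonneg _)
        gcongr
    _ = α ^ 2 * (Fintype.card Y : ℝ) ^ 2 / (γ * (Fintype.card X : ℝ))
          + β * δ * (Fintype.card Y : ℝ) / (Fintype.card X : ℝ) := by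
        field_simp
        ring

/-- If for every `y'` the number of `y` with `|L_f(y) ∩ L_{f'}(y')| ≥ α`
(for some `y'`) is at most `β|Y|`, and `γ ≤ |L_f(y)| ≤ δ` for all `y`, then
`F(ρ_f,ρ_{f'})² ≤ α²|Y|²/(γ|X|) + βδ|Y|/|X|`. -/
theorem stmt_1 {X Y : Type*} [Fintype X] [Fintype Y] [DecidableEq X] [DecidableEq Y]
    [Nonempty X] [Nonempty Y] (f f' : X → Y) (hf : Function.Surjective f)
    (α β γ δ : ℝ) (hα : 0 < α) (hβ : 0 < β) (hγ : 0 < γ) (hδ : 0 < δ)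
    (hcount : ((Finset.univ.filter (fun y : Y => ∃ y' : Y,
        α ≤ ((Finset.univ.filter (fun x : X => f x = y ∧ f' x = y')).card : ℝ))).card : ℝ)
      ≤ β * (Fintype.card Y : ℝ))
    (hlower : ∀ y : Y, γ ≤ ((Finset.univ.filter (fun x : X => f x = y)).card : ℝ))
    (hupper : ∀ y : Y, ((Finset.univ.filter (fun x : X => f x = y)).card : ℝ) ≤ δ) :
    (fidelity (hidingState f) (hidingState f')) ^ 2 ≤
      α ^ 2 * (Fintype.card Y : ℝ) ^ 2 / (γ * (Fintype.card X : ℝ))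
        + β * δ * (Fintype.card Y : ℝ) / (Fintype.card X : ℝ) :=
  stmt_1_general f f' hf α β γ δ hγ hδ hcount hlower hupper
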